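/- arXiv:2605.10964 — 7 statements merged into one kernel-verified Lean document; each statement's English description precedes it below -/
import Mathlib

section
/- Let ι and Y be nonempty finite types. Let x, q : ι → ℝ be probability vectors with x i > 0, q i > 0 for all i and ∑_i x i = ∑_i q i = 1, and for each i let P i : Y → ℝ be a probability mass function (P i y ≥ 0 and ∑_y P i y = 1). Define the mixtures M_x y = ∑_i x i * P i y and M_q y = ∑_i q i * P i y. Then ∑_{y} M_x y * Real.log (M_x y / M_q y) ≤ ∑_{i} x i * Real.log (x i / q i), where terms with M_x y = 0 contribute 0. -/
/-!
For each outcome `y`, apply the log-sum inequality to `a i = x i * P i y` and `b i = q i * P i y`.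
Since `a i / b i = x i / q i` whenever `P i y ≠ 0`, summing over `y` and using `∑ y, P i y = 1`
gives the bound; this is the data-processing inequality for the channel `i ↦ P i`.
-/

open Finset Real

theorem sub_le_mul_log_div {a c : ℝ} (ha : 0 ≤ a) (hc : 0 < c) : a - c ≤ a * log (a / c) := by
  have h := mul_nonneg hc.le (InformationTheory.klFun_nonneg (div_nonneg ha hc.le))
  rw [InformationTheory.klFun_apply] at h
  have : c * (a / c * log (a / c) + 1 - a / c) = a * log (a / c) + c - a := by
    field_simp
  linarith

theorem mul_log_add_sub_le_mul_log_div {a b t : ℝ} (ha : 0 ≤ a) (hb : 0 ≤ b)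
    (hab : b = 0 → a = 0) (ht : 0 < t) :
    a * log t + (a - b * t) ≤ a * log (a / b) := by
  rcases ha.eq_or_lt with rfl | ha
  · simpa using mul_nonneg hb ht.le
  have hb : 0 < b := hb.lt_of_ne fun h => ha.ne' (hab h.symm)
  have key := sub_le_mul_log_div ha.le (mul_pos hb ht)
  rw [← div_div, log_div (div_pos ha hb).ne' ht.ne'] at key
  linarith

/-- The log-sum inequality. -/
theorem sum_mul_log_div_sum_le {ι : Type*} (s : Finset ι) {a b : ι → ℝ}
    (ha : ∀ i ∈ s, 0 ≤ a i) (hb : ∀ i ∈ s, 0 ≤ b i) (hab : ∀ i ∈ s, b i = 0 → a i = 0) :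
    (∑ i ∈ s, a i) * log ((∑ i ∈ s, a i) / ∑ i ∈ s, b i) ≤ ∑ i ∈ s, a i * log (a i / b i) := by
  rcases (sum_nonneg ha).eq_or_lt with hA | hA
  · have hzero : ∀ i ∈ s, a i = 0 := (sum_eq_zero_iff_of_nonneg ha).mp hA.symm
    rw [← hA, zero_mul, sum_eq_zero fun i hi => by rw [hzero i hi, zero_mul]]
  obtain ⟨j, hj, haj⟩ := (sum_pos_iff_of_nonneg ha).mp hA
  have hB : 0 < ∑ i ∈ s, b i :=
    sum_pos' hb ⟨j, hj, (hb j hj).lt_of_ne fun h => haj.ne' (hab j hj h.symm)⟩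
  -- with `t = (∑ a) / (∑ b)` the correction terms `a i - b i * t` sum to zero
  have hsum := sum_le_sum fun i hi =>
    mul_log_add_sub_le_mul_log_div (ha i hi) (hb i hi) (hab i hi) (div_pos hA hB)
  rwa [sum_add_distrib, sum_sub_distrib, ← sum_mul, ← sum_mul, mul_div_cancel₀ _ hB.ne',
    sub_self, add_zero] at hsum

theorem mixture_kl_le_mixing_kl_general
    {ι Y : Type*} [Fintype ι] [Fintype Y]
    (x q : ι → ℝ) (hx : ∀ i, 0 < x i) (hq : ∀ i, 0 < q i)
    (P : ι → Y → ℝ) (hP : ∀ i y, 0 ≤ P i y) (hPs : ∀ i, ∑ y, P i y = 1) :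
    ∑ y, (∑ i, x i * P i y) * Real.log ((∑ i, x i * P i y) / (∑ i, q i * P i y))
      ≤ ∑ i, x i * Real.log (x i / q i) := by
  have hcancel : ∀ i y, x i * P i y * log (x i * P i y / (q i * P i y))
      = P i y * (x i * log (x i / q i)) := fun i y => by
    rcases (hP i y).eq_or_lt with h | h
    · simp [← h]
    · rw [mul_div_mul_right _ _ h.ne']; ring
  calc ∑ y, (∑ i, x i * P i y) * log ((∑ i, x i * P i y) / ∑ i, q i * P i y)
      ≤ ∑ y, ∑ i, x i * P i y * log (x i * P i y / (q i * P i y)) :=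
        sum_le_sum fun y _ => sum_mul_log_div_sum_le univ
          (fun i _ => mul_nonneg (hx i).le (hP i y)) (fun i _ => mul_nonneg (hq i).le (hP i y))
          (fun i _ h => by rw [(mul_eq_zero.mp h).resolve_left (hq i).ne', mul_zero])
    _ = ∑ i, (∑ y, P i y) * (x i * log (x i / q i)) := by
        simp only [hcancel, sum_mul]; exact sum_comm
    _ = ∑ i, x i * log (x i / q i) := by simp only [hPs, one_mul]

/-- Proposition 2: the KL divergence between two finite mixtures of the same
component pmfs `P i`, with mixing weights `x` and `q`, is bounded above by the
KL divergence between the mixing weight vectors. -/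
theorem mixture_kl_le_mixing_kl
    {ι Y : Type*} [Fintype ι] [Nonempty ι] [Fintype Y] [Nonempty Y]
    (x q : ι → ℝ) (hx : ∀ i, 0 < x i) (hq : ∀ i, 0 < q i)
    (hxs : ∑ i, x i = 1) (hqs : ∑ i, q i = 1)
    (P : ι → Y → ℝ) (hP : ∀ i y, 0 ≤ P i y) (hPs : ∀ i, ∑ y, P i y = 1) :
    ∑ y, (∑ i, x i * P i y) * Real.log ((∑ i, x i * P i y) / (∑ i, q i * P i y))
      ≤ ∑ i, x i * Real.log (x i / q i) :=
  mixture_kl_le_mixing_kl_general x q hx hq P hP hPs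
end

section
/- Let q > 0, λ > 0, R > 0, r ∈ ℝ, define f : ℝ → ℝ by f(b) = q * Real.exp (q * b / λ) / (q * Real.exp (q * b / λ) + R), and define the per-click payment p(b) = b * (f(b) − 1) + r + (λ / q) * Real.log (f(b) / f(r)). Then for every v ≥ r, the truthful per-click utility satisfies v * f(v) − p(v) = ∫_{r}^{v} f(z) dz ≥ 0, and at v = r the utility is exactly 0. -/
/-!
The allocation `f` is the derivative of the log-partition function
`b ↦ (λ/q) log (q e^{qb/λ} + R)`, so the envelope integral `∫_r^v f` equals its increment.
Since `log f(b) = log q + qb/λ − log (q e^{qb/λ} + R)`, the logarithmic term of the payment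
is `(v − r)` minus that same increment, and the utility `v f(v) − p(v)` collapses to it.
Nonnegativity follows from `f > 0`.
-/

open Real

noncomputable section

namespace SoftmaxAllocation

variable {q lam R r : ℝ}

def weight (q lam b : ℝ) : ℝ := q * exp (q * b / lam)

def alloc (q lam R b : ℝ) : ℝ := weight q lam b / (weight q lam b + R)

def logPartition (q lam R b : ℝ) : ℝ := lam / q * log (weight q lam b + R)

def payment (q lam R r b : ℝ) : ℝ :=
  b * (alloc q lam R b - 1) + r + lam / q * log (alloc q lam R b / alloc q lam R r)

theorem weight_pos (hq : 0 < q) (b : ℝ) : 0 < weight q lam b :=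
  mul_pos hq (exp_pos _)

theorem weight_add_pos (hq : 0 < q) (hR : 0 < R) (b : ℝ) : 0 < weight q lam b + R :=
  add_pos (weight_pos hq b) hR

theorem alloc_pos (hq : 0 < q) (hR : 0 < R) (b : ℝ) : 0 < alloc q lam R b :=
  div_pos (weight_pos hq b) (weight_add_pos hq hR b)

theorem continuous_alloc (hq : 0 < q) (hR : 0 < R) : Continuous (alloc q lam R) := by
  have hw : Continuous (weight q lam) := by unfold weight; fun_prop
  exact hw.div (hw.add continuous_const) fun b => (weight_add_pos hq hR b).ne'

theorem log_alloc (hq : 0 < q) (hR : 0 < R) (b : ℝ) :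
    log (alloc q lam R b) = log q + q * b / lam - log (weight q lam b + R) := by
  rw [alloc, log_div (weight_pos hq b).ne' (weight_add_pos hq hR b).ne', weight,
    log_mul hq.ne' (exp_pos _).ne', log_exp]

theorem hasDerivAt_weight (b : ℝ) :
    HasDerivAt (weight q lam) (weight q lam b * (q / lam)) b := by
  have hlin : HasDerivAt (fun z : ℝ => q * z / lam) (q / lam) b := by
    simpa using ((hasDerivAt_id b).const_mul q).div_const lam
  rw [weight, mul_assoc]
  exact ((hasDerivAt_exp _).comp b hlin).const_mul q

theorem hasDerivAt_logPartition (hq : 0 < q) (hlam : lam ≠ 0) (hR : 0 < R) (b : ℝ) :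
    HasDerivAt (logPartition q lam R) (alloc q lam R b) b := by
  have h : HasDerivAt (logPartition q lam R)
      (lam / q * (weight q lam b * (q / lam) / (weight q lam b + R))) b :=
    (((hasDerivAt_weight b).add_const R).log (weight_add_pos hq hR b).ne').const_mul (lam / q)
  refine h.congr_deriv ?_
  rw [alloc]
  field_simp

theorem integral_alloc (hq : 0 < q) (hlam : lam ≠ 0) (hR : 0 < R) (r v : ℝ) :
    ∫ z in r..v, alloc q lam R z = logPartition q lam R v - logPartition q lam R r :=
  intervalIntegral.integral_eq_sub_of_hasDerivAt
    (fun b _ => hasDerivAt_logPartition hq hlam hR b)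
    ((continuous_alloc hq hR).intervalIntegrable r v)

theorem integral_alloc_nonneg (hq : 0 < q) (hR : 0 < R) {v : ℝ} (hrv : r ≤ v) :
    0 ≤ ∫ z in r..v, alloc q lam R z :=
  intervalIntegral.integral_nonneg hrv fun b _ => (alloc_pos hq hR b).le

theorem mul_alloc_sub_payment (hq : 0 < q) (hlam : lam ≠ 0) (hR : 0 < R) (v : ℝ) :
    v * alloc q lam R v - payment q lam R r v =
      logPartition q lam R v - logPartition q lam R r := by
  rw [payment, log_div (alloc_pos hq hR v).ne' (alloc_pos hq hR r).ne', log_alloc hq hR,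
    log_alloc hq hR, logPartition, logPartition]
  field_simp
  ring

end SoftmaxAllocation

end

open SoftmaxAllocation

/-- Individual rationality of the single-allocation mechanism (Theorem 4):
with the Myerson payment `p b = b * (f b - 1) + r + (λ / q) * log (f b / f r)`,
the truthful per-click utility equals the envelope integral
`∫ z in r..v, f z ≥ 0` for every `v ≥ r`, and is exactly 0 at `v = r`. -/
theorem myerson_payment_ir
    (q lam R r : ℝ) (hq : 0 < q) (hlam : 0 < lam) (hR : 0 < R)
    (f : ℝ → ℝ)
    (hf : ∀ b, f b = q * Real.exp (q * b / lam) / (q * Real.exp (q * b / lam) + R))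
    (p : ℝ → ℝ)
    (hp : ∀ b, p b = b * (f b - 1) + r + (lam / q) * Real.log (f b / f r)) :
    (∀ v : ℝ, r ≤ v →
        v * f v - p v = ∫ z in r..v, f z ∧ 0 ≤ ∫ z in r..v, f z)
      ∧ r * f r - p r = 0 := by
  obtain rfl : f = alloc q lam R := funext hf
  obtain rfl : p = payment q lam R r := funext hp
  have utility_eq (v : ℝ) :
      v * alloc q lam R v - payment q lam R r v = ∫ z in r..v, alloc q lam R z := by
    rw [mul_alloc_sub_payment hq hlam.ne' hR, integral_alloc hq hlam.ne' hR]
  refine ⟨fun v hrv => ⟨utility_eq v, integral_alloc_nonneg hq hR hrv⟩, ?_⟩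
  rw [utility_eq, intervalIntegral.integral_same]
end

section
/- Let q > 0, λ > 0, R > 0, r ∈ ℝ, define f : ℝ → ℝ by f(b) = q * Real.exp (q * b / λ) / (q * Real.exp (q * b / λ) + R), and define the per-click payment p(b) = b * (f(b) − 1) + r + (λ / q) * Real.log (f(b) / f(r)). Then the mechanism is dominant-strategy incentive compatible on [r, ∞): for all v ≥ r and all b ≥ r, v * f(v) − p(v) ≥ v * f(b) − p(b). -/
/-!
Up to an additive constant the Myerson payment is `p b = b f(b) - g(b)`, where the potential
`g(b) = (λ/q) log (q e^{qb/λ} + R)` has derivative `f`. Hence the utility loss of bidding `b`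
instead of the true value `v` is `g(v) - g(b) - f(b)(v - b)`, which is nonnegative because `g`
is convex, its derivative `f` being monotone.
-/

open Real Set

theorem mul_sub_le_sub_of_hasDerivAt_of_monotone {f g : ℝ → ℝ}
    (hg : ∀ x, HasDerivAt g (f x) x) (hf : Monotone f) (s t : ℝ) :
    f s * (t - s) ≤ g t - g s := by
  have hderiv : deriv g = f := funext fun x => (hg x).deriv
  have hconv : ConvexOn ℝ univ g :=
    (hderiv ▸ hf).convexOn_univ_of_deriv fun x => (hg x).differentiableAt
  rcases lt_trichotomy s t with hst | rfl | hts
  · have h := hconv.le_slope_of_hasDerivAt (mem_univ s) (mem_univ t) hst (hg s)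
    rwa [slope_def_field, le_div_iff₀ (sub_pos.2 hst)] at h
  · simp
  · have h := hconv.slope_le_of_hasDerivAt (mem_univ t) (mem_univ s) hts (hg s)
    rw [slope_def_field, div_le_iff₀ (sub_pos.2 hts)] at h
    linarith

theorem utility_le_truthful_of_payment_eq {f g p : ℝ → ℝ}
    (hg : ∀ x, HasDerivAt g (f x) x) (hf : Monotone f) {c : ℝ}
    (hp : ∀ b, p b = b * f b - g b + c) (v b : ℝ) :
    v * f b - p b ≤ v * f v - p v := by
  rw [hp, hp]
  linarith [mul_sub_le_sub_of_hasDerivAt_of_monotone hg hf b v]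

noncomputable def softmaxAlloc (q lam R b : ℝ) : ℝ :=
  q * exp (q * b / lam) / (q * exp (q * b / lam) + R)

noncomputable def softmaxPotential (q lam R b : ℝ) : ℝ :=
  lam / q * log (q * exp (q * b / lam) + R)

section Softmax

variable {q lam R : ℝ}

theorem softmaxAlloc_pos (hq : 0 < q) (hR : 0 ≤ R) (b : ℝ) : 0 < softmaxAlloc q lam R b := by
  unfold softmaxAlloc
  positivity

theorem monotone_softmaxAlloc (hq : 0 < q) (hlam : 0 < lam) (hR : 0 ≤ R) :
    Monotone (softmaxAlloc q lam R) := by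
  intro s t hst
  have hexp : exp (q * s / lam) ≤ exp (q * t / lam) := by gcongr
  unfold softmaxAlloc
  rw [div_le_div_iff₀ (by positivity) (by positivity)]
  nlinarith [mul_le_mul_of_nonneg_left hexp (mul_nonneg hq.le hR)]

theorem hasDerivAt_softmaxPotential (hq : 0 < q) (hlam : lam ≠ 0) (hR : 0 ≤ R) (b : ℝ) :
    HasDerivAt (softmaxPotential q lam R) (softmaxAlloc q lam R b) b := by
  have hden : 0 < q * exp (q * b / lam) + R := by positivity
  have hinner : HasDerivAt (fun s => q * s / lam) (q / lam) b := by
    simpa using ((hasDerivAt_id b).const_mul q).div_const lam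
  have hderiv := (((hinner.exp.const_mul q).add_const R).log hden.ne').const_mul (lam / q)
  refine hderiv.congr_deriv ?_
  rw [softmaxAlloc]
  field_simp

theorem mul_log_softmaxAlloc (hq : 0 < q) (hlam : lam ≠ 0) (hR : 0 ≤ R) (b : ℝ) :
    lam / q * log (softmaxAlloc q lam R b) = lam / q * log q + b - softmaxPotential q lam R b := by
  have hden : 0 < q * exp (q * b / lam) + R := by positivity
  rw [softmaxAlloc, softmaxPotential, log_div (by positivity) hden.ne',
    log_mul hq.ne' (exp_pos _).ne', log_exp]
  field_simp

end Softmax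

/-- Incentive-compatibility direction of Theorem 4: with the softmax allocation
`f` and the Myerson payment `p b = b * (f b - 1) + r + (λ / q) * log (f b / f r)`,
truthful bidding is a dominant strategy on `[r, ∞)`. -/
theorem myerson_payment_dsic
    (q lam R r : ℝ) (hq : 0 < q) (hlam : 0 < lam) (hR : 0 < R)
    (f : ℝ → ℝ)
    (hf : ∀ b, f b = q * Real.exp (q * b / lam) / (q * Real.exp (q * b / lam) + R))
    (p : ℝ → ℝ)
    (hp : ∀ b, p b = b * (f b - 1) + r + (lam / q) * Real.log (f b / f r)) :
    ∀ v : ℝ, r ≤ v → ∀ b : ℝ, r ≤ b → v * f v - p v ≥ v * f b - p b := by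
  intro v _ b _
  obtain rfl : f = softmaxAlloc q lam R := funext hf
  have hpos := softmaxAlloc_pos (lam := lam) hq hR.le
  refine utility_le_truthful_of_payment_eq (hasDerivAt_softmaxPotential hq hlam.ne' hR.le)
    (monotone_softmaxAlloc hq hlam hR.le)
    (c := r + lam / q * log q - lam / q * log (softmaxAlloc q lam R r)) (fun b => ?_) v b
  rw [hp, log_div (hpos b).ne' (hpos r).ne', mul_sub (lam / q),
    mul_log_softmaxAlloc hq hlam.ne' hR.le b]
  ring
end

section
/- Let q > 0, λ > 0, R > 0, r ∈ ℝ, and define f : ℝ → ℝ by f(b) = q * Real.exp (q * b / λ) / (q * Real.exp (q * b / λ) + R). Suppose p̂ : ℝ → ℝ is any payment rule such that for all v ≥ r and b ≥ r, v * f(v) − p̂(v) ≥ v * f(b) − p̂(b). Then for every v ≥ r, p̂(v) = v * f(v) − ∫_{r}^{v} f(z) dz − (r * f(r) − p̂(r)); that is, p̂ agrees up to the additive constant (r f(r) − p̂(r)) with the Myerson payment p(v) = v (f(v) − 1) + r + (λ/q) log(f(v)/f(r)). -/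
open Filter Set Topology

/-!
Truthfulness compares the utility `U v = v f(v) - p̂(v)` of bidding truthfully at two values
`a, b`: it gives `(b - a) f(a) ≤ U b - U a ≤ (b - a) f(b)`. Hence the difference quotients of
`U` are squeezed between values of `f`, so `U' = f` wherever `f` is continuous, and the
fundamental theorem of calculus gives `U v - U r = ∫ z in r..v, f z`.
-/

section Envelope

variable {f p : ℝ → ℝ} {s : Set ℝ}

theorem sub_mul_le_utility_sub
    (hdsic : ∀ v ∈ s, ∀ b ∈ s, v * f b - p b ≤ v * f v - p v) {a b : ℝ}
    (ha : a ∈ s) (hb : b ∈ s) : (b - a) * f a ≤ (b * f b - p b) - (a * f a - p a) := by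
  have := hdsic b hb a ha
  linarith

theorem abs_slope_utility_sub_le
    (hdsic : ∀ v ∈ s, ∀ b ∈ s, v * f b - p b ≤ v * f v - p v) {x w : ℝ}
    (hx : x ∈ s) (hw : w ∈ s) (hne : w ≠ x) :
    |slope (fun v => v * f v - p v) x w - f x| ≤ |f w - f x| := by
  have hd : w - x ≠ 0 := sub_ne_zero.mpr hne
  have lower := sub_mul_le_utility_sub hdsic hx hw
  have upper := sub_mul_le_utility_sub hdsic hw hx
  set N := (w * f w - p w) - (x * f x - p x) - (w - x) * f x
  have hN : N ≤ (w - x) * (f w - f x) := by linarith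
  have hslope : slope (fun v => v * f v - p v) x w - f x = N / (w - x) := by
    rw [slope_def_field]
    field_simp
    ring
  rw [hslope, abs_div, div_le_iff₀ (abs_pos.mpr hd), abs_of_nonneg (by linarith), mul_comm,
    ← abs_mul]
  exact hN.trans (le_abs_self _)

theorem hasDerivWithinAt_utility
    (hdsic : ∀ v ∈ s, ∀ b ∈ s, v * f b - p b ≤ v * f v - p v) {x : ℝ}
    (hx : x ∈ s) (hfx : ContinuousWithinAt f s x) :
    HasDerivWithinAt (fun v => v * f v - p v) (f x) s x := by
  rw [hasDerivWithinAt_iff_tendsto_slope, ← tendsto_sub_nhds_zero_iff]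
  have hbound : ∀ᶠ w in 𝓝[s \ {x}] x,
      ‖slope (fun v => v * f v - p v) x w - f x‖ ≤ ‖f w - f x‖ :=
    eventually_mem_nhdsWithin.mono fun w hw => abs_slope_utility_sub_le hdsic hx hw.1 hw.2
  have hf_lim : Tendsto (fun w => ‖f w - f x‖) (𝓝[s \ {x}] x) (𝓝 0) := by
    simpa using ((hfx.mono sdiff_subset).tendsto.sub_const (f x)).norm
  exact squeeze_zero_norm' hbound hf_lim

theorem integral_eq_utility_sub_utility {r v : ℝ} (hrv : r ≤ v)
    (hdsic : ∀ a ∈ Icc r v, ∀ b ∈ Icc r v, a * f b - p b ≤ a * f a - p a)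
    (hf : ContinuousOn f (Icc r v)) :
    ∫ z in r..v, f z = (v * f v - p v) - (r * f r - p r) :=
  intervalIntegral.integral_eq_sub_of_hasDerivAt_of_le hrv
    (fun x hx => (hasDerivWithinAt_utility hdsic hx (hf x hx)).continuousWithinAt)
    (fun x hx => (hasDerivWithinAt_utility hdsic (Ioo_subset_Icc_self hx)
      (hf x (Ioo_subset_Icc_self hx))).hasDerivAt (Icc_mem_nhds hx.1 hx.2))
    (hf.intervalIntegrable_of_Icc hrv)

end Envelope

theorem continuous_softmax_weight {q lam R : ℝ} (hq : 0 ≤ q) (hR : 0 < R) :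
    Continuous fun b => q * Real.exp (q * b / lam) / (q * Real.exp (q * b / lam) + R) :=
  Continuous.div (by fun_prop) (by fun_prop) fun b => by positivity

theorem myerson_payment_unique_general
    (q lam R r : ℝ) (hq : 0 < q) (hR : 0 < R)
    (f : ℝ → ℝ)
    (hf : ∀ b, f b = q * Real.exp (q * b / lam) / (q * Real.exp (q * b / lam) + R))
    (phat : ℝ → ℝ)
    (hdsic : ∀ v : ℝ, r ≤ v → ∀ b : ℝ, r ≤ b →
      v * f v - phat v ≥ v * f b - phat b) :
    ∀ v : ℝ, r ≤ v →
      phat v = v * f v - (∫ z in r..v, f z) - (r * f r - phat r) := by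
  intro v hrv
  have hf_cont : Continuous f := by
    rw [funext hf]
    exact continuous_softmax_weight hq.le hR
  rw [integral_eq_utility_sub_utility hrv (fun a ha b hb => hdsic a ha.1 b hb.1)
    hf_cont.continuousOn]
  ring

/-- Uniqueness (necessity) part of Theorem 4 (Myerson's envelope
characterization): any payment rule `p̂` making the softmax allocation `f`
dominant-strategy incentive compatible on `[r, ∞)` agrees, up to the additive
constant `r * f r - p̂ r`, with the Myerson payment
`v * f v - ∫ z in r..v, f z`. -/
theorem myerson_payment_unique
    (q lam R r : ℝ) (hq : 0 < q) (hlam : 0 < lam) (hR : 0 < R)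
    (f : ℝ → ℝ)
    (hf : ∀ b, f b = q * Real.exp (q * b / lam) / (q * Real.exp (q * b / lam) + R))
    (phat : ℝ → ℝ)
    (hdsic : ∀ v : ℝ, r ≤ v → ∀ b : ℝ, r ≤ b →
      v * f v - phat v ≥ v * f b - phat b) :
    ∀ v : ℝ, r ≤ v →
      phat v = v * f v - (∫ z in r..v, f z) - (r * f r - phat r) :=
  myerson_payment_unique_general q lam R r hq hR f hf phat hdsic
end

section
/- Let q > 0, λ > 0, R > 0, r > 0, define f : ℝ → ℝ by f(b) = q * Real.exp (q * b / λ) / (q * Real.exp (q * b / λ) + R), and define the reduced payment p'(b) = b * (f(b) − 1) + r + (λ / q) * Real.log (f(b) / f(r)) − r * f(r) / 2. Then for every v ≥ r, the per-click utility is strictly positive: v * f(v) − p'(v) ≥ r * f(r) / 2 > 0. -/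
/-!
Expanding the payment, the utility is `r f(r)/2 + (v - r) - (λ/q) log (f(v)/f(r))`. The last
difference is nonnegative: adding the competing mass `R` to the denominators only damps
growth, so `f(v)/f(r)` is at most the ratio `exp (q (v - r)/λ)` of the unnormalized weights.
-/

open Real

lemma div_add_div_div_add_le_div {a b R : ℝ} (hb : 0 < b) (hba : b ≤ a) (hR : 0 ≤ R) :
    a / (a + R) / (b / (b + R)) ≤ a / b := by
  have ha : 0 < a := hb.trans_le hba
  rw [div_div_eq_mul_div, div_mul_eq_mul_div, div_div, div_le_div_iff₀ (by positivity) hb]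
  nlinarith [mul_le_mul_of_nonneg_left hba (mul_nonneg ha.le hb.le)]

noncomputable def softmaxWeight (q lam R b : ℝ) : ℝ :=
  q * exp (q * b / lam) / (q * exp (q * b / lam) + R)

section softmaxWeight

variable {q lam R : ℝ}

lemma softmaxWeight_pos (hq : 0 < q) (hR : 0 ≤ R) (b : ℝ) : 0 < softmaxWeight q lam R b := by
  unfold softmaxWeight
  positivity

lemma softmaxWeight_div_le_exp (hq : 0 < q) (hlam : 0 < lam) (hR : 0 ≤ R) {r v : ℝ}
    (hrv : r ≤ v) :
    softmaxWeight q lam R v / softmaxWeight q lam R r ≤ exp (q * (v - r) / lam) := by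
  have hexp : q * exp (q * r / lam) ≤ q * exp (q * v / lam) := by gcongr
  calc softmaxWeight q lam R v / softmaxWeight q lam R r
      ≤ q * exp (q * v / lam) / (q * exp (q * r / lam)) :=
        div_add_div_div_add_le_div (by positivity) hexp hR
    _ = exp (q * (v - r) / lam) := by
        rw [mul_div_mul_left _ _ hq.ne', ← exp_sub, mul_sub, sub_div]

lemma mul_log_softmaxWeight_div_le (hq : 0 < q) (hlam : 0 < lam) (hR : 0 ≤ R) {r v : ℝ}
    (hrv : r ≤ v) :
    lam / q * log (softmaxWeight q lam R v / softmaxWeight q lam R r) ≤ v - r := by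
  have hratio : 0 < softmaxWeight q lam R v / softmaxWeight q lam R r :=
    div_pos (softmaxWeight_pos hq hR v) (softmaxWeight_pos hq hR r)
  have hlog : log (softmaxWeight q lam R v / softmaxWeight q lam R r) ≤ q * (v - r) / lam :=
    (log_le_iff_le_exp hratio).2 (softmaxWeight_div_le_exp hq hlam hR hrv)
  calc lam / q * log (softmaxWeight q lam R v / softmaxWeight q lam R r)
      ≤ lam / q * (q * (v - r) / lam) := by gcongr
    _ = v - r := by field_simp

end softmaxWeight

/-- Remark after Theorem 4: reducing the Myerson payment by the constant
`r * f r / 2` guarantees strictly positive per-click utility, at least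
`r * f r / 2 > 0`, for every eligible bidder `v ≥ r`. -/
theorem reduced_payment_strictly_positive_utility
    (q lam R r : ℝ) (hq : 0 < q) (hlam : 0 < lam) (hR : 0 < R) (hr : 0 < r)
    (f : ℝ → ℝ)
    (hf : ∀ b, f b = q * Real.exp (q * b / lam) / (q * Real.exp (q * b / lam) + R))
    (p' : ℝ → ℝ)
    (hp' : ∀ b, p' b = b * (f b - 1) + r + (lam / q) * Real.log (f b / f r)
      - r * f r / 2) :
    ∀ v : ℝ, r ≤ v → v * f v - p' v ≥ r * f r / 2 ∧ 0 < r * f r / 2 := by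
  intro v hv
  obtain rfl : f = softmaxWeight q lam R := funext hf
  have hprice := mul_log_softmaxWeight_div_le hq hlam hR.le hv
  have hfr := softmaxWeight_pos (lam := lam) hq hR.le r
  refine ⟨?_, by positivity⟩
  rw [hp' v]
  linarith
end

section
/- Let I be a finite type of advertisers and 𝒜 a nonempty finite set of feasible allocations. For each A ∈ 𝒜 and i ∈ I let q A i ≥ 0, and let h : 𝒜 → ℝ with h A ≥ 0. For a bid profile b : I → ℝ define SW(b, A) = h A + ∑_{j} q A j * b j. Fix an advertiser i with true value v_i ≥ 0, competing bids b_{-i} ≥ 0, and a misreport b_i' ≥ 0; let b^v and b' denote the profiles in which i bids v_i and b_i' respectively. Suppose A* maximizes SW(b^v, ·) over 𝒜, Â maximizes SW(b', ·) over 𝒜, and A₋ maximizes SW(b^v, ·) over the nonempty subfamily 𝒜₋ = {A ∈ 𝒜 : q A i = 0} (note SW(b^v, A) = SW(b', A) for A ∈ 𝒜₋). Then the truthful utility q A* i * v_i − (SW(b^v, A₋) − (SW(b^v, A*) − q A* i * v_i)) is at least the misreport utility q Â i * v_i − (SW(b', A₋) − (SW(b', Â) − q Â i * b_i')). -/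
/-!
Misreporting only moves advertiser `i`'s own term of the reported welfare, and the VCG payment
charges `i` exactly that term back, so `i`'s utility under any bid equals the true welfare of the
allocation the bid selects minus the true welfare of `A₋`, an allocation without `i` and hence
unaffected by the bid. The truthful bid selects a true-welfare maximizer, so it does best.
-/

open Finset

section SocialWelfare

variable {α I R : Type*} [Fintype I] [CommRing R]

def socialWelfare (h : α → R) (q : α → I → R) (b : I → R) (A : α) : R :=
  h A + ∑ j, q A j * b j

theorem sum_mul_sub_sum_mul_of_eq_of_ne (c b b' : I → R) (i : I)
    (hagree : ∀ j, j ≠ i → b j = b' j) :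
    ∑ j, c j * b j - ∑ j, c j * b' j = c i * (b i - b' i) := by
  rw [← sum_sub_distrib, sum_eq_single i (fun j _ hj => by rw [hagree j hj, sub_self])
    (fun hi => absurd (mem_univ i) hi), mul_sub]

theorem socialWelfare_sub_socialWelfare (h : α → R) (q : α → I → R) {b b' : I → R} {i : I}
    (hagree : ∀ j, j ≠ i → b j = b' j) (A : α) :
    socialWelfare h q b A - socialWelfare h q b' A = q A i * (b i - b' i) := by
  rw [socialWelfare, socialWelfare, add_sub_add_left_eq_sub,
    sum_mul_sub_sum_mul_of_eq_of_ne _ _ _ i hagree]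

/-- The left side is the VCG utility of `i`, with true values `bv`, when it bids `b i`, `A` wins
and `Aminus` is the allocation without `i` used for the payment. -/
theorem vcg_utility_eq_socialWelfare_sub (h : α → R) (q : α → I → R) {bv b : I → R} {i : I}
    (hagree : ∀ j, j ≠ i → bv j = b j) {Aminus : α} (hAminus : q Aminus i = 0) (A : α) :
    q A i * bv i - (socialWelfare h q b Aminus - (socialWelfare h q b A - q A i * b i)) =
      socialWelfare h q bv A - socialWelfare h q bv Aminus := by
  have hA := socialWelfare_sub_socialWelfare h q hagree A
  have hAminus' := socialWelfare_sub_socialWelfare h q hagree Aminus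
  rw [hAminus, zero_mul] at hAminus'
  linear_combination hAminus' - hA

end SocialWelfare

theorem vcg_dsic_general
    {I α : Type*} [Fintype I]
    (𝒜 : Finset α)
    (q : α → I → ℝ)
    (h : α → ℝ)
    (SW : (I → ℝ) → α → ℝ)
    (hSW : ∀ b A, SW b A = h A + ∑ j, q A j * b j)
    (i : I) (vi bi' : ℝ)
    (bv b' : I → ℝ) (hbvi : bv i = vi) (hb'i : b' i = bi')
    (hagree : ∀ j, j ≠ i → bv j = b' j)
    (Astar : α)
    (hAstarMax : ∀ A ∈ 𝒜, SW bv A ≤ SW bv Astar)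
    (Ahat : α) (hAhat : Ahat ∈ 𝒜)
    (Aminus : α) (hAminusExcl : q Aminus i = 0) :
    q Astar i * vi - (SW bv Aminus - (SW bv Astar - q Astar i * vi))
      ≥ q Ahat i * vi - (SW b' Aminus - (SW b' Ahat - q Ahat i * bi')) := by
  obtain rfl : SW = socialWelfare h q := funext fun b => funext (hSW b)
  subst hbvi hb'i
  rw [ge_iff_le,
    vcg_utility_eq_socialWelfare_sub h q (fun _ _ => rfl) hAminusExcl Astar,
    vcg_utility_eq_socialWelfare_sub h q hagree hAminusExcl Ahat]
  exact sub_le_sub_right (hAstarMax Ahat hAhat) _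

/-- Dominant-strategy incentive compatibility of the screened VCG
multi-allocation auction (Theorem 5): the truthful utility of advertiser `i`
is at least its utility under any misreport `b_i'`. -/
theorem vcg_dsic
    {I α : Type*} [Fintype I]
    (𝒜 : Finset α) (h𝒜 : 𝒜.Nonempty)
    (q : α → I → ℝ) (hq : ∀ A ∈ 𝒜, ∀ i, 0 ≤ q A i)
    (h : α → ℝ) (hh : ∀ A ∈ 𝒜, 0 ≤ h A)
    (SW : (I → ℝ) → α → ℝ)
    (hSW : ∀ b A, SW b A = h A + ∑ j, q A j * b j)
    (i : I) (vi bi' : ℝ) (hvi : 0 ≤ vi) (hbi' : 0 ≤ bi')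
    (bv b' : I → ℝ) (hbvi : bv i = vi) (hb'i : b' i = bi')
    (hagree : ∀ j, j ≠ i → bv j = b' j)
    (hbv : ∀ j, 0 ≤ bv j) (hb' : ∀ j, 0 ≤ b' j)
    (Astar : α) (hAstar : Astar ∈ 𝒜)
    (hAstarMax : ∀ A ∈ 𝒜, SW bv A ≤ SW bv Astar)
    (Ahat : α) (hAhat : Ahat ∈ 𝒜)
    (hAhatMax : ∀ A ∈ 𝒜, SW b' A ≤ SW b' Ahat)
    (Aminus : α) (hAminus : Aminus ∈ 𝒜) (hAminusExcl : q Aminus i = 0)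
    (hAminusMax : ∀ A ∈ 𝒜, q A i = 0 → SW bv A ≤ SW bv Aminus) :
    q Astar i * vi - (SW bv Aminus - (SW bv Astar - q Astar i * vi))
      ≥ q Ahat i * vi - (SW b' Aminus - (SW b' Ahat - q Ahat i * bi')) :=
  vcg_dsic_general 𝒜 q h SW hSW i vi bi' bv b' hbvi hb'i hagree Astar hAstarMax Ahat hAhat Aminus
    hAminusExcl
end

section
/- Let f : Set.Ioc (0:ℝ) 1 → ℝ (equivalently, f defined on (0,1]) be strictly increasing, continuous, and strictly positive, and suppose that for all η, x, x' ∈ (0,1] with η*x ∈ (0,1] and η*x' ∈ (0,1], one has f(η*x) / f(η*x') = f(x) / f(x'). Then there exist η₀ > 0 and β > 0 such that f(x) = η₀ * x ^ β for all x ∈ (0,1]. -/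
/-!
Taking `x' = 1` in the invariance gives `f (a * b) * f 1 = f a * f b`, so `h = f / f 1` is a
continuous multiplicative function on `(0,1]`. In the coordinate `t = -log x ∈ [0, ∞)`, `log ∘ h`
becomes a continuous additive function on `[0, ∞)`; its odd extension to `ℝ` is a continuous
additive map, hence linear. Thus `h x = x ^ β`, and `β > 0` because `f` is increasing.
-/

open Set Real

lemma eq_mul_of_map_add_of_continuousOn_Ici {g : ℝ → ℝ}
    (hadd : ∀ s, 0 ≤ s → ∀ t, 0 ≤ t → g (s + t) = g s + g t)
    (hcont : ContinuousOn g (Ici 0)) {t : ℝ} (ht : 0 ≤ t) : g t = t * g 1 := by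
  have hg0 : g 0 = 0 := by simpa using hadd 0 le_rfl 0 le_rfl
  set G : ℝ → ℝ := fun t => g (max t 0) - g (max (-t) 0)
  have hG : ∀ t, 0 ≤ t → G t = g t := fun t ht => by simp [G, ht, hg0]
  have hGadd : ∀ s t, G (s + t) = G s + G t := by
    intro s t
    -- `a = max a 0 - max (-a) 0`, so both sides below differ by `(s + t) - s - t = 0`
    have hsplit : max (s + t) 0 + max (-s) 0 + max (-t) 0
        = max (-(s + t)) 0 + max s 0 + max t 0 := by
      simp only [max_def]; split_ifs <;> linarith
    have h := congrArg g hsplit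
    have hnn : ∀ a : ℝ, 0 ≤ max a 0 := fun a => le_max_right a 0
    rw [hadd _ (add_nonneg (hnn _) (hnn _)) _ (hnn _), hadd _ (hnn _) _ (hnn _),
      hadd _ (add_nonneg (hnn _) (hnn _)) _ (hnn _), hadd _ (hnn _) _ (hnn _)] at h
    simp only [G]
    linarith
  have hGcont : Continuous G := by
    have hmax : Continuous fun t : ℝ => max t 0 := continuous_id.max continuous_const
    exact (hcont.comp_continuous hmax fun t => le_max_right t 0).sub
      (hcont.comp_continuous (continuous_neg.max continuous_const) fun t => le_max_right (-t) 0)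
  have := map_real_smul (AddMonoidHom.mk' G hGadd) hGcont t 1
  simp only [AddMonoidHom.mk'_apply, smul_eq_mul, mul_one] at this
  rw [← hG t ht, this, hG 1 zero_le_one]

lemma exists_eq_rpow_of_map_mul_of_continuousOn_Ioc {h : ℝ → ℝ}
    (hpos : ∀ x ∈ Ioc (0 : ℝ) 1, 0 < h x)
    (hmul : ∀ x ∈ Ioc (0 : ℝ) 1, ∀ y ∈ Ioc (0 : ℝ) 1, h (x * y) = h x * h y)
    (hcont : ContinuousOn h (Ioc 0 1)) : ∃ β : ℝ, ∀ x ∈ Ioc (0 : ℝ) 1, h x = x ^ β := by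
  have hexp : ∀ t : ℝ, 0 ≤ t → exp (-t) ∈ Ioc (0 : ℝ) 1 := fun t ht =>
    ⟨exp_pos _, exp_le_one_iff.mpr (neg_nonpos.mpr ht)⟩
  set g : ℝ → ℝ := fun t => log (h (exp (-t)))
  have hadd : ∀ s, 0 ≤ s → ∀ t, 0 ≤ t → g (s + t) = g s + g t := by
    intro s hs t ht
    simp only [g, neg_add, exp_add, hmul _ (hexp s hs) _ (hexp t ht)]
    exact log_mul (hpos _ (hexp s hs)).ne' (hpos _ (hexp t ht)).ne'
  have hgcont : ContinuousOn g (Ici 0) :=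
    (hcont.comp (continuous_exp.comp continuous_neg).continuousOn fun t ht => hexp t ht).log
      fun t ht => (hpos _ (hexp t ht)).ne'
  refine ⟨-g 1, fun x hx => ?_⟩
  have hlog : log (h x) = log x * -g 1 := calc
    log (h x) = g (-log x) := by simp only [g, neg_neg, exp_log hx.1]
    _ = log x * -g 1 := by
      rw [eq_mul_of_map_add_of_continuousOn_Ici hadd hgcont
        (neg_nonneg.mpr (log_nonpos hx.1.le hx.2))]
      ring
  rw [rpow_def_of_pos hx.1, ← hlog, exp_log (hpos x hx)]

/-- Proposition A.1: a strictly increasing, continuous, strictly positive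
function on `(0,1]` satisfying the relative welfare invariance
`f(ηx)/f(ηx') = f(x)/f(x')` must be a power function `f x = η₀ * x ^ β`
with `η₀ > 0` and `β > 0`. -/
theorem organic_welfare_power_characterization
    (f : ℝ → ℝ)
    (hmono : StrictMonoOn f (Set.Ioc (0:ℝ) 1))
    (hcont : ContinuousOn f (Set.Ioc (0:ℝ) 1))
    (hpos : ∀ x ∈ Set.Ioc (0:ℝ) 1, 0 < f x)
    (hinv : ∀ η ∈ Set.Ioc (0:ℝ) 1, ∀ x ∈ Set.Ioc (0:ℝ) 1, ∀ x' ∈ Set.Ioc (0:ℝ) 1,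
      η * x ∈ Set.Ioc (0:ℝ) 1 → η * x' ∈ Set.Ioc (0:ℝ) 1 →
      f (η * x) / f (η * x') = f x / f x') :
    ∃ η₀ > (0:ℝ), ∃ β > (0:ℝ), ∀ x ∈ Set.Ioc (0:ℝ) 1, f x = η₀ * x ^ β := by
  have h1 : (1 : ℝ) ∈ Ioc (0 : ℝ) 1 := right_mem_Ioc.mpr one_pos
  have hf1 : 0 < f 1 := hpos 1 h1
  have hmul : ∀ a ∈ Ioc (0 : ℝ) 1, ∀ b ∈ Ioc (0 : ℝ) 1,
      f (a * b) / f 1 = f a / f 1 * (f b / f 1) := by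
    intro a ha b hb
    have hab : a * b ∈ Ioc (0 : ℝ) 1 := ⟨mul_pos ha.1 hb.1, mul_le_one₀ ha.2 hb.1.le hb.2⟩
    have h := hinv a ha b hb 1 h1 hab (by simpa using ha)
    rw [mul_one, div_eq_div_iff (hpos a ha).ne' hf1.ne'] at h
    field_simp
    linarith
  obtain ⟨β, hβ⟩ := exists_eq_rpow_of_map_mul_of_continuousOn_Ioc
    (fun x hx => div_pos (hpos x hx) hf1) hmul (hcont.div_const _)
  have hf : ∀ x ∈ Ioc (0 : ℝ) 1, f x = f 1 * x ^ β := fun x hx => by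
    rw [← hβ x hx]; field_simp
  refine ⟨f 1, hf1, β, ?_, hf⟩
  have hhalf : (1 / 2 : ℝ) ∈ Ioc (0 : ℝ) 1 := by norm_num
  have hlt : f 1 * (1 / 2) ^ β < f 1 * 1 ^ β := by
    rw [← hf _ hhalf, ← hf 1 h1]; exact hmono hhalf h1 (by norm_num)
  rw [one_rpow] at hlt
  by_contra! hβ_nonpos
  have := one_le_rpow_of_pos_of_le_one_of_nonpos hhalf.1 hhalf.2 hβ_nonpos
  nlinarith
end
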